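/- Let u be a positive C² function on the open unit ball B ⊆ ℝᴺ satisfying Δu ≥ u^q with q > 1 (a subsolution), and let w(x) = Λ(1−|x|²)^{−2/(q−1)} for a suitable constant Λ = Λ(N,q) > 0 chosen so that Δw ≤ w^q on B. Then u ≤ w on B. In particular every solution of Δu = u^q on B satisfies u(0) ≤ Λ. -/

import Mathlib

/-!
For `r ≤ 1` the function `w_r x = Λ (r² - ‖x‖²)^(-α)`, `α = 2/(q-1)`, is a supersolution:
the radial formula `Δ g(‖x‖²) = 4 g''(‖x‖²) ‖x‖² + 2 N g'(‖x‖²)` gives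
`Δ w_r ≤ w_r^q` as soon as `Λ^(q-1) ≥ α (4 (α + 1) + 2 N)`, because `α q = α + 2`.
For `r < 1` the subsolution `u` is bounded on the closed ball of radius `r` while `w_r` blows up
at its boundary, so `u - w_r` has an interior maximum; there `Δ u ≤ Δ w_r`, and if `u > w_r`
at that point then `u^q ≤ Δ u ≤ Δ w_r ≤ w_r^q < u^q`. Letting `r → 1` gives `u ≤ w_1`.
-/

/-- The Laplacian of `u : ℝᴺ → ℝ`, as the trace of the second derivative. -/
noncomputable def laplacian {N : ℕ} (u : EuclideanSpace ℝ (Fin N) → ℝ)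
    (x : EuclideanSpace ℝ (Fin N)) : ℝ :=
  ∑ i : Fin N, iteratedFDeriv ℝ 2 u x
    ![EuclideanSpace.single i (1 : ℝ), EuclideanSpace.single i (1 : ℝ)]

open Filter Topology Metric Set
open scoped Laplacian RealInnerProductSpace

theorem laplacian_eq_innerProductSpace_laplacian {N : ℕ} (u : EuclideanSpace ℝ (Fin N) → ℝ) :
    laplacian u = Δ u := by
  rw [InnerProductSpace.laplacian_eq_iteratedFDeriv_orthonormalBasis u
    (EuclideanSpace.basisFun (Fin N) ℝ)]
  ext x
  simp only [laplacian, EuclideanSpace.basisFun_apply]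

theorem IsLocalMax.deriv_deriv_nonpos {f : ℝ → ℝ} {a : ℝ} (hmax : IsLocalMax f a)
    (hf : ContinuousAt f a) : deriv (deriv f) a ≤ 0 := by
  by_contra! hpos
  have hconst : f =ᶠ[𝓝 a] fun _ => f a :=
    (hmax.and (isLocalMin_of_deriv_deriv_pos hpos hmax.deriv_eq_zero hf)).mono
      fun _ h => le_antisymm h.1 h.2
  have hderiv : deriv f =ᶠ[𝓝 a] fun _ => 0 :=
    hconst.eventuallyEq_nhds.mono fun _ h => by rw [h.deriv_eq, deriv_const]
  simp [hderiv.deriv_eq] at hpos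

theorem ContDiffAt.deriv_deriv_comp_line {F : Type*} [NormedAddCommGroup F] [NormedSpace ℝ F]
    {φ : F → ℝ} {x : F} (hφ : ContDiffAt ℝ 2 φ x) (v : F) :
    deriv (deriv fun t : ℝ => φ (x + t • v)) 0 = fderiv ℝ (fderiv ℝ φ) x v v := by
  have hline : ∀ t : ℝ, HasDerivAt (fun s : ℝ => x + s • v) v t := fun t => by
    simpa using ((hasDerivAt_id t).smul_const v).const_add x
  have hline0 : Tendsto (fun t : ℝ => x + t • v) (𝓝 0) (𝓝 x) := by
    simpa using (hline 0).continuousAt.tendsto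
  have hfirst : deriv (fun t : ℝ => φ (x + t • v)) =ᶠ[𝓝 0] fun t => fderiv ℝ φ (x + t • v) v := by
    have hnear : ∀ᶠ y in 𝓝 x, ContDiffAt ℝ 2 φ y := hφ.eventually (by decide)
    filter_upwards [hline0.eventually hnear] with t ht
    exact ((ht.differentiableAt two_ne_zero).hasFDerivAt.comp_hasDerivAt t (hline t)).deriv
  have hsecond : HasFDerivAt (fderiv ℝ φ) (fderiv ℝ (fderiv ℝ φ) x) (x + (0 : ℝ) • v) := by
    have h1 : ContDiffAt ℝ 1 (fderiv ℝ φ) x := hφ.fderiv_right (by norm_num)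
    rw [zero_smul, add_zero]
    exact (h1.differentiableAt one_ne_zero).hasFDerivAt
  rw [hfirst.deriv_eq]
  have h3 : HasDerivAt (fun t : ℝ => fderiv ℝ φ (x + t • v) v) (fderiv ℝ (fderiv ℝ φ) x v v) 0 :=
    (ContinuousLinearMap.apply ℝ ℝ v).hasFDerivAt.comp_hasDerivAt 0
      (hsecond.comp_hasDerivAt 0 (hline 0))
  exact h3.deriv

theorem IsCompact.exists_isLocalMax_of_pos {X : Type*} [TopologicalSpace X] {φ : X → ℝ}
    {U K : Set X} (hK : IsCompact K) (hU : IsOpen U) (hKU : K ⊆ U) (hφ : ContinuousOn φ K)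
    (hout : ∀ y ∈ U \ K, φ y ≤ 0) {x : X} (hx : x ∈ U) (hpos : 0 < φ x) :
    ∃ x₀ ∈ U, IsLocalMax φ x₀ ∧ 0 < φ x₀ := by
  have hxK : x ∈ K := by_contra fun h => (hout x ⟨hx, h⟩).not_gt hpos
  obtain ⟨x₀, hx₀K, hmax⟩ := hK.exists_isMaxOn ⟨x, hxK⟩ hφ
  have hpos₀ : 0 < φ x₀ := hpos.trans_le (hmax hxK)
  refine ⟨x₀, hKU hx₀K, ?_, hpos₀⟩
  filter_upwards [hU.mem_nhds (hKU hx₀K)] with y hy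
  by_cases hyK : y ∈ K
  · exact hmax hyK
  · exact (hout y ⟨hy, hyK⟩).trans hpos₀.le

theorem hasDerivAt_const_mul_sub_rpow (Λ c p : ℝ) {t : ℝ} (ht : t < c) :
    HasDerivAt (fun s => Λ * (c - s) ^ p) (-(Λ * p) * (c - t) ^ (p - 1)) t := by
  have h := ((hasDerivAt_id t).const_sub c).rpow_const (p := p) (Or.inl (sub_pos.2 ht).ne')
  exact (h.const_mul Λ).congr_deriv (by simp only [id]; ring)

noncomputable def kellerOssermanConst (n : ℕ) (q : ℝ) : ℝ :=
  (2 / (q - 1) * (4 * (2 / (q - 1) + 1) + 2 * n)) ^ (1 / (q - 1))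

theorem kellerOssermanConst_pos (n : ℕ) {q : ℝ} (hq : 1 < q) : 0 < kellerOssermanConst n q := by
  have : 0 < 2 / (q - 1) := div_pos two_pos (sub_pos.2 hq)
  unfold kellerOssermanConst
  positivity

theorem kellerOssermanConst_rpow (n : ℕ) {q : ℝ} (hq : 1 < q) :
    kellerOssermanConst n q ^ (q - 1) = 2 / (q - 1) * (4 * (2 / (q - 1) + 1) + 2 * n) := by
  have : 0 < 2 / (q - 1) := div_pos two_pos (sub_pos.2 hq)
  rw [kellerOssermanConst, ← Real.rpow_mul (by positivity), one_div_mul_cancel (sub_pos.2 hq).ne',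
    Real.rpow_one]

section

variable {E : Type*} [NormedAddCommGroup E]

noncomputable def barrier (Λ r p : ℝ) (y : E) : ℝ := Λ * (r ^ 2 - ‖y‖ ^ 2) ^ p

theorem barrier_one (Λ p : ℝ) :
    (barrier Λ 1 p : E → ℝ) = fun z => Λ * (1 - ‖z‖ ^ 2) ^ p := by
  funext z
  rw [barrier, one_pow]

theorem exists_isCompact_forall_lt_barrier [ProperSpace E] {Λ p : ℝ} (hΛ : 0 < Λ) (hp : p < 0)
    (r C : ℝ) :
    ∃ K ⊆ ball (0 : E) r, IsCompact K ∧ ∀ y ∈ ball (0 : E) r \ K, C < barrier Λ r p y := by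
  have hblowup : ∀ᶠ s in 𝓝[>] 0, C < Λ * s ^ p :=
    ((tendsto_rpow_neg_nhdsGT_zero hp).const_mul_atTop hΛ).eventually_gt_atTop C
  obtain ⟨ε, hε, hsmall⟩ := mem_nhdsGT_iff_exists_Ioo_subset.1 hblowup
  refine ⟨closedBall 0 r ∩ {y | ε ≤ r ^ 2 - ‖y‖ ^ 2}, ?_, ?_, ?_⟩
  · rintro y ⟨hyr, hyε⟩
    rw [mem_closedBall_zero_iff] at hyr
    rw [mem_ball_zero_iff]
    refine hyr.lt_of_ne fun h => ?_
    have hεle : ε ≤ r ^ 2 - ‖y‖ ^ 2 := hyε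
    rw [h, sub_self] at hεle
    exact (mem_Ioi.1 hε).not_ge hεle
  · exact (isCompact_closedBall 0 r).inter_right (isClosed_le continuous_const (by fun_prop))
  · rintro y ⟨hyr, hyK⟩
    have hy : ‖y‖ < r := mem_ball_zero_iff.1 hyr
    have hlt : r ^ 2 - ‖y‖ ^ 2 < ε := not_le.1 fun h => hyK ⟨ball_subset_closedBall hyr, h⟩
    exact hsmall ⟨sub_pos.2 (by gcongr), hlt⟩

variable [InnerProductSpace ℝ E]

theorem IsLocalMax.laplacian_nonpos [FiniteDimensional ℝ E] {φ : E → ℝ} {x : E}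
    (hmax : IsLocalMax φ x) (hφ : ContDiffAt ℝ 2 φ x) : Δ φ x ≤ 0 := by
  rw [InnerProductSpace.laplacian_eq_iteratedFDeriv_stdOrthonormalBasis]
  refine Finset.sum_nonpos fun i _ => ?_
  set v := stdOrthonormalBasis ℝ E i
  have hline : Continuous fun t : ℝ => x + t • v := by fun_prop
  have hmax_line : IsLocalMax (fun t : ℝ => φ (x + t • v)) 0 :=
    IsLocalMax.comp_continuous (g := fun t : ℝ => x + t • v) (by simpa using hmax)
      hline.continuousAt
  rw [iteratedFDeriv_two_apply]
  simp only [Matrix.cons_val_zero, Matrix.cons_val_one]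
  rw [← hφ.deriv_deriv_comp_line]
  exact hmax_line.deriv_deriv_nonpos
    (ContinuousAt.comp (g := φ) (by simpa using hφ.continuousAt) hline.continuousAt)

theorem le_of_rpow_le_laplacian_of_laplacian_le_rpow [FiniteDimensional ℝ E] {u w : E → ℝ}
    {U K : Set E} {q : ℝ} (hq : 0 < q) (hU : IsOpen U) (hK : IsCompact K) (hKU : K ⊆ U)
    (hu : ContDiffOn ℝ 2 u U) (hw : ContDiffOn ℝ 2 w U) (hw_nonneg : ∀ y ∈ U, 0 ≤ w y)
    (hsub : ∀ y ∈ U, u y ^ q ≤ Δ u y) (hsuper : ∀ y ∈ U, Δ w y ≤ w y ^ q)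
    (hout : ∀ y ∈ U \ K, u y ≤ w y) : ∀ y ∈ U, u y ≤ w y := by
  intro x hx
  by_contra! hlt
  obtain ⟨x₀, hx₀, hmax, hpos⟩ := hK.exists_isLocalMax_of_pos (φ := u - w) hU hKU
    ((hu.continuousOn.sub hw.continuousOn).mono hKU) (fun y hy => sub_nonpos.2 (hout y hy)) hx
    (sub_pos.2 hlt)
  have hux₀ := hu.contDiffAt (hU.mem_nhds hx₀)
  have hwx₀ := hw.contDiffAt (hU.mem_nhds hx₀)
  have hΔ : Δ u x₀ ≤ Δ w x₀ := by
    have := hmax.laplacian_nonpos (hux₀.sub hwx₀)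
    rw [hux₀.laplacian_sub hwx₀] at this
    linarith
  have hrpow : w x₀ ^ q < u x₀ ^ q :=
    Real.rpow_lt_rpow (hw_nonneg x₀ hx₀) (sub_pos.1 hpos) hq
  linarith [hsub x₀ hx₀, hsuper x₀ hx₀]

theorem laplacian_comp_norm_sq [FiniteDimensional ℝ E] {g g' : ℝ → ℝ} {g'' : ℝ} {x : E}
    (hg : ∀ᶠ t in 𝓝 (‖x‖ ^ 2), HasDerivAt g (g' t) t) (hg' : HasDerivAt g' g'' (‖x‖ ^ 2)) :
    Δ (fun y : E => g (‖y‖ ^ 2)) x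
      = 4 * g'' * ‖x‖ ^ 2 + 2 * Module.finrank ℝ E * g' (‖x‖ ^ 2) := by
  let B : E →L[ℝ] E →L[ℝ] ℝ := innerSL ℝ
  have hnormSq : ∀ y : E, HasFDerivAt (fun z : E => ‖z‖ ^ 2) ((2 : ℝ) • B y) y := fun y =>
    (hasFDerivAt_id y).norm_sq.congr_fderiv (by rw [two_smul, two_smul]; rfl)
  have hnear : ∀ᶠ y in 𝓝 x, HasDerivAt g (g' (‖y‖ ^ 2)) (‖y‖ ^ 2) :=
    ((hnormSq x).continuousAt.tendsto).eventually hg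
  have hfirst : fderiv ℝ (fun y => g (‖y‖ ^ 2)) =ᶠ[𝓝 x] fun y => (2 * g' (‖y‖ ^ 2)) • B y := by
    filter_upwards [hnear] with y hy
    rw [HasFDerivAt.fderiv (f := fun y => g (‖y‖ ^ 2)) (hy.comp_hasFDerivAt y (hnormSq y)),
      smul_smul, mul_comm]
  have hsecond : HasFDerivAt (fun y => (2 * g' (‖y‖ ^ 2)) • B y)
      ((2 * g' (‖x‖ ^ 2)) • B + ((2 : ℝ) • g'' • (2 : ℝ) • B x).smulRight (B x)) x :=
    ((hg'.comp_hasFDerivAt x (hnormSq x)).const_mul 2).smul B.hasFDerivAt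
  rw [InnerProductSpace.laplacian_eq_iteratedFDeriv_stdOrthonormalBasis]
  simp only [iteratedFDeriv_two_apply, Matrix.cons_val_zero, Matrix.cons_val_one,
    hfirst.fderiv_eq, hsecond.fderiv]
  have hB : ∀ a b : E, B a b = ⟪a, b⟫ := fun _ _ => rfl
  have hsum := (stdOrthonormalBasis ℝ E).sum_inner_mul_inner x x
  simp only [real_inner_comm x, real_inner_self_eq_norm_sq] at hsum
  simp only [add_apply, smul_apply,
    ContinuousLinearMap.smulRight_apply, hB, OrthonormalBasis.inner_eq_one, smul_eq_mul,
    Finset.sum_add_distrib, Finset.sum_const, Finset.card_univ, Fintype.card_fin, nsmul_eq_mul]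
  rw [← hsum, Finset.mul_sum, add_comm]
  congr 1
  · exact Finset.sum_congr rfl fun i _ => by ring
  · ring

theorem contDiffOn_barrier (Λ r p : ℝ) : ContDiffOn ℝ 2 (barrier Λ r p : E → ℝ) (ball 0 r) := by
  intro y hy
  have hs : r ^ 2 - ‖y‖ ^ 2 ≠ 0 := (sub_pos.2 (by gcongr; exact mem_ball_zero_iff.1 hy)).ne'
  exact (((Real.contDiffAt_rpow_const_of_ne hs).comp y
    (contDiff_const.sub (contDiff_norm_sq ℝ)).contDiffAt).const_smul Λ).contDiffWithinAt

theorem laplacian_barrier [FiniteDimensional ℝ E] (Λ r p : ℝ) {x : E} (hx : ‖x‖ < r) :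
    Δ (barrier Λ r p : E → ℝ) x = 4 * (Λ * p * (p - 1)) * (r ^ 2 - ‖x‖ ^ 2) ^ (p - 2) * ‖x‖ ^ 2
      - 2 * Module.finrank ℝ E * (Λ * p) * (r ^ 2 - ‖x‖ ^ 2) ^ (p - 1) := by
  have hx2 : ‖x‖ ^ 2 < r ^ 2 := by gcongr
  have hg : ∀ᶠ t in 𝓝 (‖x‖ ^ 2), HasDerivAt (fun s => Λ * (r ^ 2 - s) ^ p)
      (-(Λ * p) * (r ^ 2 - t) ^ (p - 1)) t :=
    (eventually_lt_nhds hx2).mono fun t ht => hasDerivAt_const_mul_sub_rpow Λ (r ^ 2) p ht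
  have hg' := hasDerivAt_const_mul_sub_rpow (-(Λ * p)) (r ^ 2) (p - 1) hx2
  rw [show p - 1 - 1 = p - 2 by ring] at hg'
  unfold barrier
  rw [laplacian_comp_norm_sq hg hg']
  ring

theorem laplacian_barrier_le_rpow [FiniteDimensional ℝ E] {q Λ r : ℝ} (hq : 1 < q)
    (hΛ : kellerOssermanConst (Module.finrank ℝ E) q ≤ Λ)
    {x : E} (hx : ‖x‖ < r) (hr : r ≤ 1) :
    Δ (barrier Λ r (-2 / (q - 1)) : E → ℝ) x ≤ barrier Λ r (-2 / (q - 1)) x ^ q := by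
  have hq1 : 0 < q - 1 := sub_pos.2 hq
  have hΛ₀ : 0 < Λ := (kellerOssermanConst_pos _ hq).trans_le hΛ
  have hΛq := Real.rpow_le_rpow (kellerOssermanConst_pos _ hq).le hΛ hq1.le
  rw [kellerOssermanConst_rpow _ hq] at hΛq
  set α := 2 / (q - 1) with hα_def
  have hα : 0 < α := div_pos two_pos hq1
  have hαq : -α * q = -α - 2 := by rw [hα_def]; field_simp; ring
  set N : ℝ := (Module.finrank ℝ E : ℝ)
  rw [laplacian_barrier Λ r _ hx, barrier, neg_div]
  set s := r ^ 2 - ‖x‖ ^ 2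
  have hx2 : ‖x‖ ^ 2 < r ^ 2 := by gcongr
  have hs : 0 < s := sub_pos.2 hx2
  have hx1 : ‖x‖ ^ 2 ≤ 1 := by nlinarith [norm_nonneg x]
  have hs1 : s ≤ 1 := by nlinarith [norm_nonneg x]
  have hpow : s ^ (-α - 1) = s ^ (-α - 2) * s := by
    rw [← Real.rpow_add_one hs.ne', show -α - 2 + 1 = -α - 1 by ring]
  have hbarrier : (Λ * s ^ (-α)) ^ q = Λ * Λ ^ (q - 1) * s ^ (-α - 2) := by
    rw [Real.mul_rpow hΛ₀.le (Real.rpow_nonneg hs.le _), ← Real.rpow_mul hs.le, hαq,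
      Real.rpow_sub_one hΛ₀.ne', mul_div_cancel₀ _ hΛ₀.ne']
  rw [hpow, hbarrier]
  have hkey : 4 * α * (α + 1) * ‖x‖ ^ 2 + 2 * N * α * s ≤ Λ ^ (q - 1) := by
    have hN : 0 ≤ N := Nat.cast_nonneg _
    nlinarith [mul_le_mul_of_nonneg_left hx1 (by positivity : 0 ≤ 4 * α * (α + 1)),
      mul_le_mul_of_nonneg_left hs1 (by positivity : 0 ≤ 2 * N * α)]
  calc 4 * (Λ * -α * (-α - 1)) * s ^ (-α - 2) * ‖x‖ ^ 2 - 2 * N * (Λ * -α) * (s ^ (-α - 2) * s)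
      = Λ * s ^ (-α - 2) * (4 * α * (α + 1) * ‖x‖ ^ 2 + 2 * N * α * s) := by ring
    _ ≤ Λ * s ^ (-α - 2) * Λ ^ (q - 1) := by gcongr
    _ = Λ * Λ ^ (q - 1) * s ^ (-α - 2) := by ring

theorem le_barrier_of_subsolution [FiniteDimensional ℝ E] {q Λ r : ℝ} (hq : 1 < q)
    (hΛ : kellerOssermanConst (Module.finrank ℝ E) q ≤ Λ)
    (hr : r < 1) {u : E → ℝ} (hu : ContDiffOn ℝ 2 u (ball 0 1))
    (hsub : ∀ y ∈ ball (0 : E) 1, u y ^ q ≤ Δ u y) :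
    ∀ y ∈ ball (0 : E) r, u y ≤ barrier Λ r (-2 / (q - 1)) y := by
  have hball : ball (0 : E) r ⊆ ball 0 1 := ball_subset_ball hr.le
  obtain ⟨C, hC⟩ := (isCompact_closedBall (0 : E) r).bddAbove_image
    (hu.continuousOn.mono (closedBall_subset_ball hr))
  have hΛ₀ : 0 < Λ := (kellerOssermanConst_pos _ hq).trans_le hΛ
  have hp : -2 / (q - 1) < 0 := div_neg_of_neg_of_pos (by norm_num) (sub_pos.2 hq)
  obtain ⟨K, hKr, hK, hbig⟩ := exists_isCompact_forall_lt_barrier (E := E) hΛ₀ hp r C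
  refine le_of_rpow_le_laplacian_of_laplacian_le_rpow (by linarith) isOpen_ball hK hKr
    (hu.mono hball) (contDiffOn_barrier Λ r _) (fun y hy => ?_) (fun y hy => hsub y (hball hy))
    (fun y hy => laplacian_barrier_le_rpow hq hΛ (mem_ball_zero_iff.1 hy) hr.le)
    (fun y hy => (hC ⟨y, ball_subset_closedBall hy.1, rfl⟩).trans (hbig y hy).le)
  have hy' : ‖y‖ < r := mem_ball_zero_iff.1 hy
  exact mul_nonneg hΛ₀.le (Real.rpow_nonneg (sub_nonneg.2 (by gcongr)) _)

theorem le_barrier_one_of_subsolution [FiniteDimensional ℝ E] {q Λ : ℝ} (hq : 1 < q)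
    (hΛ : kellerOssermanConst (Module.finrank ℝ E) q ≤ Λ)
    {u : E → ℝ} (hu : ContDiffOn ℝ 2 u (ball 0 1)) (hsub : ∀ y ∈ ball (0 : E) 1, u y ^ q ≤ Δ u y) :
    ∀ y ∈ ball (0 : E) 1, u y ≤ barrier Λ 1 (-2 / (q - 1)) y := by
  intro y hy
  have hy1 : ‖y‖ < 1 := mem_ball_zero_iff.1 hy
  have hcont : ContinuousAt (fun r : ℝ => barrier Λ r (-2 / (q - 1)) y) 1 :=
    continuousAt_const.mul ((by fun_prop : ContinuousAt (fun r : ℝ => r ^ 2 - ‖y‖ ^ 2) 1).rpow_const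
      (Or.inl (sub_pos.2 (by nlinarith [norm_nonneg y])).ne'))
  refine ge_of_tendsto (hcont.tendsto.mono_left (nhdsWithin_le_nhds (s := Iio 1))) ?_
  filter_upwards [Ioo_mem_nhdsLT hy1] with r hr
  exact le_barrier_of_subsolution hq hΛ hr.2 hu hsub y (mem_ball_zero_iff.2 hr.1)

end

theorem keller_osserman_barrier_general (N : ℕ) (q : ℝ) (hq : 1 < q) :
    ∃ Λ : ℝ, 0 < Λ ∧
      (∀ x ∈ Metric.ball (0 : EuclideanSpace ℝ (Fin N)) 1,
        laplacian (fun z => Λ * (1 - ‖z‖ ^ 2) ^ (-2 / (q - 1))) x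
          ≤ (Λ * (1 - ‖x‖ ^ 2) ^ (-2 / (q - 1))) ^ q) ∧
      ∀ u : EuclideanSpace ℝ (Fin N) → ℝ,
        ContDiffOn ℝ 2 u (Metric.ball (0 : EuclideanSpace ℝ (Fin N)) 1) →
        (∀ x ∈ Metric.ball (0 : EuclideanSpace ℝ (Fin N)) 1, 0 < u x) →
        (∀ x ∈ Metric.ball (0 : EuclideanSpace ℝ (Fin N)) 1, u x ^ q ≤ laplacian u x) →
        (∀ x ∈ Metric.ball (0 : EuclideanSpace ℝ (Fin N)) 1,
          u x ≤ Λ * (1 - ‖x‖ ^ 2) ^ (-2 / (q - 1))) ∧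
        u 0 ≤ Λ := by
  have hΛ : kellerOssermanConst (Module.finrank ℝ (EuclideanSpace ℝ (Fin N))) q
      ≤ kellerOssermanConst N q := by
    rw [finrank_euclideanSpace_fin]
  refine ⟨kellerOssermanConst N q, kellerOssermanConst_pos N hq, fun x hx => ?_,
    fun u hu _ hsub => ?_⟩
  · have hsuper := laplacian_barrier_le_rpow hq hΛ (mem_ball_zero_iff.1 hx) le_rfl
    rwa [barrier_one, ← laplacian_eq_innerProductSpace_laplacian] at hsuper
  · simp only [laplacian_eq_innerProductSpace_laplacian] at hsub
    have hle := le_barrier_one_of_subsolution hq hΛ hu hsub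
    simp only [barrier_one] at hle
    exact ⟨hle, by simpa using hle 0 (mem_ball_self one_pos)⟩

/-- Keller–Osserman barrier on the unit ball: there is `Λ = Λ(N,q) > 0` such that
`w(x) = Λ(1−|x|²)^{−2/(q−1)}` is a supersolution of `Δw = w^q` on the unit ball, and
every positive C² subsolution `u` (`Δu ≥ u^q`) satisfies `u ≤ w`; in particular
`u(0) ≤ Λ`. -/
theorem keller_osserman_barrier (N : ℕ) (hN : 1 ≤ N) (q : ℝ) (hq : 1 < q) :
    ∃ Λ : ℝ, 0 < Λ ∧
      (∀ x ∈ Metric.ball (0 : EuclideanSpace ℝ (Fin N)) 1,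
        laplacian (fun z => Λ * (1 - ‖z‖ ^ 2) ^ (-2 / (q - 1))) x
          ≤ (Λ * (1 - ‖x‖ ^ 2) ^ (-2 / (q - 1))) ^ q) ∧
      ∀ u : EuclideanSpace ℝ (Fin N) → ℝ,
        ContDiffOn ℝ 2 u (Metric.ball (0 : EuclideanSpace ℝ (Fin N)) 1) →
        (∀ x ∈ Metric.ball (0 : EuclideanSpace ℝ (Fin N)) 1, 0 < u x) →
        (∀ x ∈ Metric.ball (0 : EuclideanSpace ℝ (Fin N)) 1, u x ^ q ≤ laplacian u x) →
        (∀ x ∈ Metric.ball (0 : EuclideanSpace ℝ (Fin N)) 1,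
          u x ≤ Λ * (1 - ‖x‖ ^ 2) ^ (-2 / (q - 1))) ∧
        u 0 ≤ Λ :=
  keller_osserman_barrier_general N q hq
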